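/- arXiv:1002.1216 — 4 statements merged into one kernel-verified Lean document; each statement's English description precedes it below -/
import Mathlib

section
/- Let n ≥ 1 and let T₁, T₂, T₃ : ℝ → Mₙ(ℂ) be differentiable on an interval I ⊆ ℝ and satisfy Nahm's equations on I. Then for every fixed η, ζ ∈ ℂ the function s ↦ det(η·1ₙ + A(ζ)(s)) is constant on I, i.e. the spectral curve det(η·1ₙ + A(ζ)) = 0 is invariant under the Nahm flow. -/
/-!
Nahm's equations are equivalent to the Lax equation `dA(ζ)/ds = ⁅A(ζ), B(ζ)⁆` with
`B(ζ) = -iT₃ + ζ(T₁ - iT₂)`, and `η·1` commutes with everything, so `M = η·1 + A(ζ)` also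
satisfies `dM/ds = ⁅M, B⁆`. By Jacobi's formula `d(det M)/ds = tr(adj M · ⁅M, B⁆)`, which vanishes
because `adj M` commutes with `M` (no invertibility is needed): `adj M · M = M · adj M = det M · 1`.
-/

open Matrix Complex

attribute [local instance] Matrix.normedAddCommGroup Matrix.normedSpace

namespace Matrix

variable {m R : Type*} [Fintype m] [DecidableEq m] [CommRing R]

theorem trace_adjugate_mul (M N : Matrix m m R) :
    (adjugate M * N).trace = ∑ j, (M.updateCol j fun k => N k j).det := by
  refine Finset.sum_congr rfl fun j _ => ?_
  rw [← cramer_apply, cramer_eq_adjugate_mulVec]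
  rfl

theorem det_updateCol_eq_sum_perm (M : Matrix m m R) (j : m) (v : m → R) :
    (M.updateCol j v).det =
      ∑ σ : Equiv.Perm m, (σ.sign : R) * ((∏ i ∈ Finset.univ.erase j, M (σ i) i) * v (σ j)) := by
  rw [det_apply']
  refine Finset.sum_congr rfl fun σ _ => ?_
  rw [← Finset.prod_erase_mul _ _ (Finset.mem_univ j), updateCol_self,
    Finset.prod_congr rfl fun i hi => updateCol_ne (Finset.ne_of_mem_erase hi)]

theorem trace_adjugate_mul_lie (M B : Matrix m m R) : (adjugate M * ⁅M, B⁆).trace = 0 := by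
  rw [Ring.lie_def, Matrix.mul_sub, trace_sub, ← Matrix.mul_assoc, ← Matrix.mul_assoc,
    trace_mul_comm (adjugate M * B) M, ← Matrix.mul_assoc, adjugate_mul, mul_adjugate, sub_self]

end Matrix

section Jacobi

variable {𝕜 𝔸 m : Type*} [Fintype m] [DecidableEq m]

theorem HasDerivAt.matrix_det [NontriviallyNormedField 𝕜] [NormedCommRing 𝔸] [NormedAlgebra 𝕜 𝔸]
    {f : 𝕜 → Matrix m m 𝔸} {f' : Matrix m m 𝔸} {x : 𝕜} (hf : HasDerivAt f f' x) :
    HasDerivAt (fun t => (f t).det) (adjugate (f x) * f').trace x := by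
  have hentry : ∀ i j, HasDerivAt (fun t => f t i j) (f' i j) x := fun i j =>
    hasDerivAt_pi.mp (hasDerivAt_pi.mp hf i) j
  simp_rw [trace_adjugate_mul, det_updateCol_eq_sum_perm, det_apply']
  rw [Finset.sum_comm]
  refine HasDerivAt.fun_sum fun σ _ => ?_
  simp_rw [← Finset.mul_sum]
  refine (HasDerivAt.fun_finsetProd fun i _ => hentry (σ i) i).const_mul _ |>.congr_deriv ?_
  simp only [smul_eq_mul]

theorem Convex.det_eq_of_hasDerivAt_lie [RCLike 𝕜] [NormedCommRing 𝔸] [NormedAlgebra 𝕜 𝔸]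
    {I : Set 𝕜} (hI : Convex ℝ I) {M B : 𝕜 → Matrix m m 𝔸}
    (hM : ∀ x ∈ I, HasDerivAt M ⁅M x, B x⁆ x) {s t : 𝕜} (hs : s ∈ I) (ht : t ∈ I) :
    (M s).det = (M t).det := by
  have hdet : ∀ x ∈ I, HasDerivWithinAt (fun x => (M x).det) 0 I x := fun x hx => by
    simpa only [trace_adjugate_mul_lie] using (hM x hx).matrix_det.hasDerivWithinAt
  simpa [sub_eq_zero, eq_comm] using
    hI.norm_image_sub_le_of_norm_hasDerivWithin_le hdet (fun _ _ => norm_zero.le) hs ht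

end Jacobi

section Lax

variable {n : Type*} [Fintype n]

def laxMatrix (ζ : ℂ) (T₁ T₂ T₃ : Matrix n n ℂ) : Matrix n n ℂ :=
  (T₁ + I • T₂) - (2 * I * ζ) • T₃ + ζ ^ 2 • (T₁ - I • T₂)

def laxPartner (ζ : ℂ) (T₁ T₂ T₃ : Matrix n n ℂ) : Matrix n n ℂ :=
  (-I) • T₃ + ζ • (T₁ - I • T₂)

theorem laxMatrix_lie_eq (ζ : ℂ) (T₁ T₂ T₃ : Matrix n n ℂ) :
    laxMatrix ζ ⁅T₂, T₃⁆ ⁅T₃, T₁⁆ ⁅T₁, T₂⁆ = ⁅laxMatrix ζ T₁ T₂ T₃, laxPartner ζ T₁ T₂ T₃⁆ := by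
  simp only [laxMatrix, laxPartner, Ring.lie_def, Matrix.add_mul, Matrix.mul_add, Matrix.sub_mul,
    Matrix.mul_sub, Matrix.smul_mul, Matrix.mul_smul, smul_add, smul_sub, smul_smul]
  match_scalars <;> ring_nf <;> simp [I_sq] <;> ring

theorem HasDerivAt.laxMatrix {T₁ T₂ T₃ : ℝ → Matrix n n ℂ} {T₁' T₂' T₃' : Matrix n n ℂ} {s : ℝ}
    (ζ : ℂ) (h₁ : HasDerivAt T₁ T₁' s) (h₂ : HasDerivAt T₂ T₂' s) (h₃ : HasDerivAt T₃ T₃' s) :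
    HasDerivAt (fun s => laxMatrix ζ (T₁ s) (T₂ s) (T₃ s)) (laxMatrix ζ T₁' T₂' T₃') s :=
  ((h₁.add (h₂.const_smul I)).sub (h₃.const_smul (2 * I * ζ))).add
    ((h₁.sub (h₂.const_smul I)).const_smul (ζ ^ 2))

end Lax

theorem stmt1_general (n : ℕ) (I : Set ℝ) (hI : Convex ℝ I)
    (T₁ T₂ T₃ T₁' T₂' T₃' : ℝ → Matrix (Fin n) (Fin n) ℂ)
    (h1 : ∀ s ∈ I, HasDerivAt T₁ (T₁' s) s)
    (h2 : ∀ s ∈ I, HasDerivAt T₂ (T₂' s) s)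
    (h3 : ∀ s ∈ I, HasDerivAt T₃ (T₃' s) s)
    (hN1 : ∀ s ∈ I, T₁' s = T₂ s * T₃ s - T₃ s * T₂ s)
    (hN2 : ∀ s ∈ I, T₂' s = T₃ s * T₁ s - T₁ s * T₃ s)
    (hN3 : ∀ s ∈ I, T₃' s = T₁ s * T₂ s - T₂ s * T₁ s)
    (η ζ : ℂ) :
    ∀ s ∈ I, ∀ t ∈ I,
      (η • (1 : Matrix (Fin n) (Fin n) ℂ) + ((T₁ s + Complex.I • T₂ s)
          - (2 * Complex.I * ζ) • T₃ s + ζ ^ 2 • (T₁ s - Complex.I • T₂ s))).det =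
      (η • (1 : Matrix (Fin n) (Fin n) ℂ) + ((T₁ t + Complex.I • T₂ t)
          - (2 * Complex.I * ζ) • T₃ t + ζ ^ 2 • (T₁ t - Complex.I • T₂ t))).det := by
  set A := fun s => laxMatrix ζ (T₁ s) (T₂ s) (T₃ s)
  set B := fun s => laxPartner ζ (T₁ s) (T₂ s) (T₃ s)
  have hLax : ∀ s ∈ I, HasDerivAt (fun s => η • 1 + A s) ⁅η • 1 + A s, B s⁆ s := by
    intro s hs
    have hA := (h1 s hs).laxMatrix ζ (h2 s hs) (h3 s hs)
    rw [hN1 s hs, hN2 s hs, hN3 s hs, ← Ring.lie_def, ← Ring.lie_def, ← Ring.lie_def,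
      laxMatrix_lie_eq] at hA
    rw [Ring.lie_def, add_mul, mul_add, ((Commute.one_left (B s)).smul_left η).eq,
      add_sub_add_left_eq_sub]
    exact hA.const_add _
  intro s hs t ht
  exact hI.det_eq_of_hasDerivAt_lie hLax hs ht

/-- If `T₁ T₂ T₃` are differentiable on an interval `I` (a convex subset of `ℝ`) and satisfy
Nahm's equations there, then for every fixed `η, ζ ∈ ℂ` the function
`s ↦ det(η·1ₙ + A(ζ)(s))`, with `A(ζ) = (T₁+iT₂) − 2iT₃ζ + (T₁−iT₂)ζ²`, is constant on `I`:
the spectral curve is invariant under the Nahm flow. -/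
theorem stmt1 (n : ℕ) (hn : 1 ≤ n) (I : Set ℝ) (hI : Convex ℝ I)
    (T₁ T₂ T₃ T₁' T₂' T₃' : ℝ → Matrix (Fin n) (Fin n) ℂ)
    (h1 : ∀ s ∈ I, HasDerivAt T₁ (T₁' s) s)
    (h2 : ∀ s ∈ I, HasDerivAt T₂ (T₂' s) s)
    (h3 : ∀ s ∈ I, HasDerivAt T₃ (T₃' s) s)
    (hN1 : ∀ s ∈ I, T₁' s = T₂ s * T₃ s - T₃ s * T₂ s)
    (hN2 : ∀ s ∈ I, T₂' s = T₃ s * T₁ s - T₁ s * T₃ s)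
    (hN3 : ∀ s ∈ I, T₃' s = T₁ s * T₂ s - T₂ s * T₁ s)
    (η ζ : ℂ) :
    ∀ s ∈ I, ∀ t ∈ I,
      (η • (1 : Matrix (Fin n) (Fin n) ℂ) + ((T₁ s + Complex.I • T₂ s)
          - (2 * Complex.I * ζ) • T₃ s + ζ ^ 2 • (T₁ s - Complex.I • T₂ s))).det =
      (η • (1 : Matrix (Fin n) (Fin n) ℂ) + ((T₁ t + Complex.I • T₂ t)
          - (2 * Complex.I * ζ) • T₃ t + ζ ^ 2 • (T₁ t - Complex.I • T₂ t))).det :=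
  stmt1_general n I hI T₁ T₂ T₃ T₁' T₂' T₃' h1 h2 h3 hN1 hN2 hN3 η ζ
end

section
/- Let n ≥ 1 and let T₁, T₂, T₃ ∈ Mₙ(ℂ) be skew-Hermitian, i.e. Tᵢᴴ = −Tᵢ for i = 1,2,3. Define P(η,ζ) = det(η·1ₙ + A(ζ)). Then for all η ∈ ℂ and all ζ ∈ ℂ with ζ ≠ 0, P satisfies the reality condition P(η,ζ) = (−1)ⁿ ζ^{2n} · conj( P( −conj(η)/conj(ζ)², −1/conj(ζ) ) ). -/
open Matrix Complex

/-- For skew-Hermitian `T₁ T₂ T₃`, the spectral polynomial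
`P(η,ζ) = det(η·1ₙ + A(ζ))`, with `A(ζ) = (T₁+iT₂) − 2iT₃ζ + (T₁−iT₂)ζ²`, satisfies the
reality condition `P(η,ζ) = (−1)ⁿ ζ^{2n} conj(P(−conj(η)/conj(ζ)², −1/conj(ζ)))`. -/
theorem stmt2 (n : ℕ) (hn : 1 ≤ n) (T₁ T₂ T₃ : Matrix (Fin n) (Fin n) ℂ)
    (h1 : T₁ᴴ = -T₁) (h2 : T₂ᴴ = -T₂) (h3 : T₃ᴴ = -T₃) :
    ∀ η ζ : ℂ, ζ ≠ 0 →
      (η • (1 : Matrix (Fin n) (Fin n) ℂ) + ((T₁ + Complex.I • T₂)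
          - (2 * Complex.I * ζ) • T₃ + ζ ^ 2 • (T₁ - Complex.I • T₂))).det =
      (-1) ^ n * ζ ^ (2 * n) *
        (starRingEnd ℂ)
          (((-(starRingEnd ℂ) η / ((starRingEnd ℂ) ζ) ^ 2) • (1 : Matrix (Fin n) (Fin n) ℂ)
            + ((T₁ + Complex.I • T₂)
              - (2 * Complex.I * (-1 / (starRingEnd ℂ) ζ)) • T₃
              + (-1 / (starRingEnd ℂ) ζ) ^ 2 • (T₁ - Complex.I • T₂))).det) := by
  intro η ζ hζ
  have hζ' : (starRingEnd ℂ) ζ ≠ 0 := by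
    simpa using hζ
  set B : Matrix (Fin n) (Fin n) ℂ :=
    (-(starRingEnd ℂ) η / ((starRingEnd ℂ) ζ) ^ 2) • (1 : Matrix (Fin n) (Fin n) ℂ)
      + ((T₁ + Complex.I • T₂)
        - (2 * Complex.I * (-1 / (starRingEnd ℂ) ζ)) • T₃
        + (-1 / (starRingEnd ℂ) ζ) ^ 2 • (T₁ - Complex.I • T₂)) with hB
  have key : (-(ζ ^ 2)) • Bᴴ =
      η • (1 : Matrix (Fin n) (Fin n) ℂ) + ((T₁ + Complex.I • T₂)
        - (2 * Complex.I * ζ) • T₃ + ζ ^ 2 • (T₁ - Complex.I • T₂)) := by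
    rw [hB]
    simp only [conjTranspose_add, conjTranspose_sub, conjTranspose_smul, conjTranspose_one,
      h1, h2, h3, Complex.star_def, map_div₀, map_neg, map_pow, _root_.map_mul, map_ofNat,
      Complex.conj_conj, Complex.conj_I, _root_.map_one]
    match_scalars <;> (field_simp; try ring) <;> simp [Complex.ext_iff] <;> ring
  have hdet : (η • (1 : Matrix (Fin n) (Fin n) ℂ) + ((T₁ + Complex.I • T₂)
        - (2 * Complex.I * ζ) • T₃ + ζ ^ 2 • (T₁ - Complex.I • T₂))).det
      = (-(ζ ^ 2)) ^ n * Bᴴ.det := by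
    rw [← key, Matrix.det_smul, Fintype.card_fin]
  rw [hdet, Matrix.det_conjTranspose]
  have : (-(ζ ^ 2)) ^ n = (-1 : ℂ) ^ n * ζ ^ (2 * n) := by
    rw [neg_pow, pow_mul]
  rw [this]
  rfl
end

section
/- Let n ≥ 2, let a₂, …, aₙ ∈ ℂ, and let β ∈ ℂ with β ≠ 0. Suppose η, ζ ∈ ℂ with ζ ≠ 0 satisfy the cyclic monopole spectral curve equation ηⁿ + a₂η^{n−2}ζ² + a₃η^{n−3}ζ³ + … + aₙζⁿ + βζ^{2n} + (−1)ⁿ conj(β) = 0. Set x = η/ζ and y = βζⁿ − (−1)ⁿ conj(β) ζ^{−n}. Then y² = (xⁿ + a₂x^{n−2} + a₃x^{n−3} + … + aₙ)² − 4(−1)ⁿ|β|², i.e. (x,y) lies on the hyperelliptic spectral curve of sl(n) affine Toda theory. -/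
open Complex Finset

lemma pow_add_sum_mul_pow_eq_pow_mul_div {K : Type*} [Field K] {n : ℕ} (s : Finset ℕ)
    (hs : ∀ r ∈ s, r ≤ n) (a : ℕ → K) (η : K) {ζ : K} (hζ : ζ ≠ 0) :
    η ^ n + ∑ r ∈ s, a r * η ^ (n - r) * ζ ^ r
      = ζ ^ n * ((η / ζ) ^ n + ∑ r ∈ s, a r * (η / ζ) ^ (n - r)) := by
  rw [mul_add, mul_sum, div_pow, mul_div_cancel₀ _ (pow_ne_zero n hζ)]
  congr 1
  refine sum_congr rfl fun r hr => ?_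
  rw [← Nat.sub_add_cancel (hs r hr), pow_add, Nat.add_sub_cancel, div_pow]
  field_simp

theorem stmt5_general (n : ℕ) (a : ℕ → ℂ) (β : ℂ)
    (η ζ : ℂ) (hζ : ζ ≠ 0)
    (hcurve : η ^ n + (∑ r ∈ Finset.Icc 2 n, a r * η ^ (n - r) * ζ ^ r)
        + β * ζ ^ (2 * n) + (-1) ^ n * (starRingEnd ℂ) β = 0) :
    (β * ζ ^ n - (-1) ^ n * (starRingEnd ℂ) β / ζ ^ n) ^ 2
      = ((η / ζ) ^ n + ∑ r ∈ Finset.Icc 2 n, a r * (η / ζ) ^ (n - r)) ^ 2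
        - 4 * (-1) ^ n * (β * (starRingEnd ℂ) β) := by
  have hζn : ζ ^ n ≠ 0 := pow_ne_zero n hζ
  rw [pow_add_sum_mul_pow_eq_pow_mul_div _ (fun r hr => (mem_Icc.mp hr).2) a η hζ,
    two_mul, pow_add] at hcurve
  -- dividing the curve by `ζⁿ` expresses `P(x)` as `-(u + v)` with `u v = (-1)ⁿ |β|²`
  have hP : (η / ζ) ^ n + ∑ r ∈ Icc 2 n, a r * (η / ζ) ^ (n - r)
      = -(β * ζ ^ n + (-1) ^ n * (starRingEnd ℂ) β / ζ ^ n) := by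
    field_simp
    linear_combination hcurve
  rw [hP]
  field_simp
  ring

/-- If `(η,ζ)` with `ζ ≠ 0` lies on the cyclic monopole spectral curve
`ηⁿ + a₂η^{n−2}ζ² + … + aₙζⁿ + βζ^{2n} + (−1)ⁿ conj(β) = 0`, then with `x = η/ζ` and
`y = βζⁿ − (−1)ⁿ conj(β) ζ^{−n}` one has
`y² = (xⁿ + a₂x^{n−2} + … + aₙ)² − 4(−1)ⁿ|β|²`, i.e. `(x,y)` lies on the hyperelliptic
spectral curve of `sl(n)` affine Toda theory. -/
theorem stmt5 (n : ℕ) (hn : 2 ≤ n) (a : ℕ → ℂ) (β : ℂ) (hβ : β ≠ 0)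
    (η ζ : ℂ) (hζ : ζ ≠ 0)
    (hcurve : η ^ n + (∑ r ∈ Finset.Icc 2 n, a r * η ^ (n - r) * ζ ^ r)
        + β * ζ ^ (2 * n) + (-1) ^ n * (starRingEnd ℂ) β = 0) :
    (β * ζ ^ n - (-1) ^ n * (starRingEnd ℂ) β / ζ ^ n) ^ 2
      = ((η / ζ) ^ n + ∑ r ∈ Finset.Icc 2 n, a r * (η / ζ) ^ (n - r)) ^ 2
        - 4 * (-1) ^ n * (β * (starRingEnd ℂ) β) :=
  stmt5_general n a β η ζ hζ hcurve
end

section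
/- Let n ≥ 2, and let p, q ∈ ℂ with |p|² + |q|² = 1. For ζ with qζ + p ≠ 0 set ζ̃ = (conj(p)ζ − conj(q))/(qζ + p), and for η ∈ ℂ set η̃ = η/(qζ + p)². Let P : ℂ × ℂ → ℂ be differentiable in its first argument and suppose the invariance P(η̃, ζ̃) = P(η, ζ)·(qζ+p)^{−2n} holds for all η ∈ ℂ and all ζ with qζ + p ≠ 0. Then: (i) ∂₁P(η̃, ζ̃) = ∂₁P(η,ζ)·(qζ+p)^{−(2n−2)}; and (ii) for all natural numbers r, s and all η, ζ with qζ + p ≠ 0 and ∂₁P(η,ζ) ≠ 0, ζ̃ʳ η̃ˢ · (qζ+p)^{−2} / ∂₁P(η̃,ζ̃) = (conj(p)ζ − conj(q))ʳ · (qζ+p)^{2n−4−r−2s} · ηˢ / ∂₁P(η,ζ), where the power (qζ+p)^{2n−4−r−2s} is an integer power. (This expresses that under the rotation (η,ζ) ↦ (η̃,ζ̃) the differential ζʳηˢ dζ/∂_ηP pulls back to (conj(p)ζ−conj(q))ʳ(qζ+p)^{2n−4−r−2s}ηˢ dζ/∂_ηP, using dζ̃/dζ = (qζ+p)^{−2}.)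 -/
/-!
Differentiating the invariance in `η` (the map `η ↦ η/(qζ+p)²` is linear, so the chain rule
contributes the factor `(qζ+p)⁻²`) gives (i); (ii) is then a rearrangement of powers of `qζ+p`.
-/

theorem deriv_eq_mul_of_comp_div_eq {𝕜 : Type*} [NontriviallyNormedField 𝕜] {f g : 𝕜 → 𝕜}
    {c k : 𝕜} (hc : c ≠ 0) (h : ∀ y, f (y / c) = g y * k) (x : 𝕜) :
    deriv f (x / c) = deriv g x * k * c := by
  have hcomp : deriv (fun y => f (c⁻¹ * y)) x = c⁻¹ * deriv f (c⁻¹ * x) :=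
    deriv_comp_mul_left c⁻¹ f x
  simp only [inv_mul_eq_div, h, deriv_mul_const_field] at hcomp
  rw [hcomp, div_mul_cancel₀ _ hc]

theorem div_pow_mul_div_sq_pow_mul_zpow_div_eq {K : Type*} [Field K] {c : K} (hc : c ≠ 0)
    (A η D : K) (n : ℤ) (r s : ℕ) :
    (A / c) ^ r * (η / c ^ 2) ^ s * c ^ (-2 : ℤ) / (D * c ^ (-(2 * n - 2)))
      = A ^ r * c ^ (2 * n - 4 - r - 2 * s) * η ^ s / D := by
  have hpow : c ^ (2 * n - 4 - r - 2 * s) * c ^ r * (c ^ 2) ^ s * c ^ 2 * c ^ (-(2 * n - 2))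
      = 1 := by
    rw [← pow_mul, ← zpow_natCast c r, ← zpow_natCast c (2 * s), ← zpow_natCast c 2,
      ← zpow_add₀ hc, ← zpow_add₀ hc, ← zpow_add₀ hc, ← zpow_add₀ hc]
    convert zpow_zero c using 2
    push_cast
    ring
  rw [mul_comm D, ← div_div]
  congr 1
  rw [div_pow, div_pow, zpow_neg, zpow_ofNat]
  field_simp
  linear_combination -(A ^ r * η ^ s) * hpow

theorem stmt12_general (n : ℕ) (p q : ℂ)
    (P : ℂ → ℂ → ℂ)
    (hinv : ∀ η ζ : ℂ, q * ζ + p ≠ 0 →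
      P (η / (q * ζ + p) ^ 2) (((starRingEnd ℂ) p * ζ - (starRingEnd ℂ) q) / (q * ζ + p))
        = P η ζ * (q * ζ + p) ^ (-(2 * (n : ℤ)))) :
    (∀ η ζ : ℂ, q * ζ + p ≠ 0 →
      deriv (fun η' => P η' (((starRingEnd ℂ) p * ζ - (starRingEnd ℂ) q) / (q * ζ + p)))
          (η / (q * ζ + p) ^ 2)
        = deriv (fun η' => P η' ζ) η * (q * ζ + p) ^ (-(2 * (n : ℤ) - 2))) ∧
    (∀ (r s : ℕ) (η ζ : ℂ), q * ζ + p ≠ 0 → deriv (fun η' => P η' ζ) η ≠ 0 →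
      (((starRingEnd ℂ) p * ζ - (starRingEnd ℂ) q) / (q * ζ + p)) ^ r
          * (η / (q * ζ + p) ^ 2) ^ s * (q * ζ + p) ^ (-2 : ℤ)
          / deriv (fun η' => P η' (((starRingEnd ℂ) p * ζ - (starRingEnd ℂ) q) / (q * ζ + p)))
              (η / (q * ζ + p) ^ 2)
        = ((starRingEnd ℂ) p * ζ - (starRingEnd ℂ) q) ^ r
            * (q * ζ + p) ^ (2 * (n : ℤ) - 4 - (r : ℤ) - 2 * (s : ℤ)) * η ^ s
            / deriv (fun η' => P η' ζ) η) := by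
  have hderiv : ∀ η ζ : ℂ, q * ζ + p ≠ 0 →
      deriv (fun η' => P η' (((starRingEnd ℂ) p * ζ - (starRingEnd ℂ) q) / (q * ζ + p)))
          (η / (q * ζ + p) ^ 2)
        = deriv (fun η' => P η' ζ) η * (q * ζ + p) ^ (-(2 * (n : ℤ) - 2)) := by
    intro η ζ hc
    rw [deriv_eq_mul_of_comp_div_eq (pow_ne_zero 2 hc) (fun y => hinv y ζ hc), mul_assoc,
      ← zpow_natCast, ← zpow_add₀ hc]
    congr 2
    ring
  refine ⟨hderiv, fun r s η ζ hc _ => ?_⟩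
  rw [hderiv η ζ hc]
  exact div_pow_mul_div_sq_pow_mul_zpow_div_eq hc _ _ _ _ r s

/-- Behaviour of the differentials `ζʳηˢ dζ/∂_ηP` under the rotation
`ζ̃ = (conj(p)ζ − conj(q))/(qζ + p)`, `η̃ = η/(qζ + p)²` with `|p|² + |q|² = 1`, given the
invariance `P(η̃, ζ̃) = P(η,ζ)(qζ+p)^{−2n}`:
(i) `∂₁P(η̃, ζ̃) = ∂₁P(η,ζ)(qζ+p)^{−(2n−2)}`;
(ii) `ζ̃ʳ η̃ˢ (qζ+p)^{−2}/∂₁P(η̃,ζ̃) = (conj(p)ζ−conj(q))ʳ (qζ+p)^{2n−4−r−2s} ηˢ/∂₁P(η,ζ)`. -/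
theorem stmt12 (n : ℕ) (hn : 2 ≤ n) (p q : ℂ)
    (hpq : ‖p‖ ^ 2 + ‖q‖ ^ 2 = 1)
    (P : ℂ → ℂ → ℂ)
    (hdiff : ∀ ζ η : ℂ, DifferentiableAt ℂ (fun η' => P η' ζ) η)
    (hinv : ∀ η ζ : ℂ, q * ζ + p ≠ 0 →
      P (η / (q * ζ + p) ^ 2) (((starRingEnd ℂ) p * ζ - (starRingEnd ℂ) q) / (q * ζ + p))
        = P η ζ * (q * ζ + p) ^ (-(2 * (n : ℤ)))) :
    (∀ η ζ : ℂ, q * ζ + p ≠ 0 →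
      deriv (fun η' => P η' (((starRingEnd ℂ) p * ζ - (starRingEnd ℂ) q) / (q * ζ + p)))
          (η / (q * ζ + p) ^ 2)
        = deriv (fun η' => P η' ζ) η * (q * ζ + p) ^ (-(2 * (n : ℤ) - 2))) ∧
    (∀ (r s : ℕ) (η ζ : ℂ), q * ζ + p ≠ 0 → deriv (fun η' => P η' ζ) η ≠ 0 →
      (((starRingEnd ℂ) p * ζ - (starRingEnd ℂ) q) / (q * ζ + p)) ^ r
          * (η / (q * ζ + p) ^ 2) ^ s * (q * ζ + p) ^ (-2 : ℤ)
          / deriv (fun η' => P η' (((starRingEnd ℂ) p * ζ - (starRingEnd ℂ) q) / (q * ζ + p)))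
              (η / (q * ζ + p) ^ 2)
        = ((starRingEnd ℂ) p * ζ - (starRingEnd ℂ) q) ^ r
            * (q * ζ + p) ^ (2 * (n : ℤ) - 4 - (r : ℤ) - 2 * (s : ℤ)) * η ^ s
            / deriv (fun η' => P η' ζ) η) :=
  stmt12_general n p q P hinv
end
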